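/- Let K ⊂ K' ⊂ ℝ^n be compact sets, and let 𝓕 be a family of closed balls such that for every x ∈ K there exists R_x > 0 with closure(B_R(x)) ∈ 𝓕 for all 0 < R ≤ R_x. Let φ ∈ C_c(K', [0,∞)) and ε > 0. Then there exist finitely many functions χ_1, …, χ_q such that: (i) each χ_p is continuous, compactly supported in some ball B_R(x) with x ∈ K and 0 < R ≤ R_x, nonnegative, and rotationally symmetric about x; (ii) Σ_p χ_p ≤ φ on ℝ^n and ‖Σ_p χ_p − φ‖_{C^0(K)} ≤ ε. -/

import Mathlib

/-!
Let `u ≥ 0` be continuous with `u ≤ M` on `K`, and let `N` be the Besicovitch constant of the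
space. Around each point of the compact set `K₁ = K ∩ {u ≥ M/2}` choose a ball of the family so
small that `u > M/4` on it. Besicovitch splits a cover of `K₁` by such balls into `N` subfamilies
of pairwise disjoint balls; by compactness finitely many balls suffice, and they may be shrunk
slightly while still covering `K₁`. Radial ramps of height `A = M/(4(N+1))`, equal to `A` on the
shrunk balls and supported in the original ones, sum to at most `N A < M/4 < u` wherever they do not
vanish, and to at least `A` on `K₁`. So `u` minus their sum lies in `[0, (1 - 1/(4(N+1))) M]` on `K`.
Iterating from `u = φ` makes the error on `K` decay geometrically.
-/

open Metric Set Function Besicovitch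

universe u

variable {α : Type*} [MetricSpace α]

def IsRadialBump (K : Set α) (𝓕 : Set (Set α)) (χ : α → ℝ) : Prop :=
  Continuous χ ∧ (∀ z, 0 ≤ χ z) ∧
    ∃ x ∈ K, ∃ R : ℝ, 0 < R ∧ closedBall x R ∈ 𝓕 ∧
      HasCompactSupport χ ∧ tsupport χ ⊆ ball x R ∧ ∀ z w, dist z x = dist w x → χ z = χ w

def radialBumpSums (K : Set α) (𝓕 : Set (Set α)) : AddSubmonoid (α → ℝ) :=
  AddSubmonoid.closure {χ | IsRadialBump K 𝓕 χ}

noncomputable def radialRamp (x : α) (r₁ r₂ : ℝ) (z : α) : ℝ :=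
  max 0 (min 1 ((r₂ - dist z x) / (r₂ - r₁)))

section radialRamp

variable {x : α} {r₁ r₂ : ℝ}

lemma continuous_radialRamp (x : α) (r₁ r₂ : ℝ) : Continuous (radialRamp x r₁ r₂) := by
  unfold radialRamp
  fun_prop

lemma radialRamp_nonneg (x : α) (r₁ r₂ : ℝ) (z : α) : 0 ≤ radialRamp x r₁ r₂ z :=
  le_max_left _ _

lemma radialRamp_le_one (x : α) (r₁ r₂ : ℝ) (z : α) : radialRamp x r₁ r₂ z ≤ 1 :=
  max_le zero_le_one (min_le_left _ _)

lemma radialRamp_eq_one (h : r₁ < r₂) {z : α} (hz : dist z x ≤ r₁) :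
    radialRamp x r₁ r₂ z = 1 := by
  have : 1 ≤ (r₂ - dist z x) / (r₂ - r₁) := (one_le_div (sub_pos.2 h)).2 (by linarith)
  rw [radialRamp, min_eq_left this, max_eq_right zero_le_one]

lemma support_radialRamp_subset (h : r₁ < r₂) : support (radialRamp x r₁ r₂) ⊆ ball x r₂ := by
  intro z hz
  by_contra hzx
  have : (r₂ - dist z x) / (r₂ - r₁) ≤ 0 :=
    div_nonpos_of_nonpos_of_nonneg (by simpa [mem_ball] using hzx) (sub_pos.2 h).le
  exact hz (max_eq_left ((min_le_right _ _).trans this))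

lemma isRadialBump_const_mul_radialRamp [ProperSpace α] {K : Set α} {𝓕 : Set (Set α)}
    (hx : x ∈ K) {R : ℝ} (hR : closedBall x R ∈ 𝓕) (hR₀ : 0 < R) (h₁₂ : r₁ < r₂) (h₂R : r₂ < R)
    {A : ℝ} (hA : 0 ≤ A) : IsRadialBump K 𝓕 (fun z => A * radialRamp x r₁ r₂ z) := by
  have hts : tsupport (fun z => A * radialRamp x r₁ r₂ z) ⊆ closedBall x r₂ :=
    (tsupport_mul_subset_right).trans <| closure_minimal
      ((support_radialRamp_subset h₁₂).trans ball_subset_closedBall) isClosed_closedBall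
  refine ⟨continuous_const.mul (continuous_radialRamp x r₁ r₂),
    fun z => mul_nonneg hA (radialRamp_nonneg x r₁ r₂ z), x, hx, R, hR₀, hR,
    (isCompact_closedBall x r₂).of_isClosed_subset (isClosed_tsupport _) hts,
    hts.trans (closedBall_subset_ball h₂R), fun z w hzw => ?_⟩
  simp only [radialRamp, hzw]

end radialRamp

lemma Finset.sum_le_of_pairwiseDisjoint_support {ι β M : Type*} [AddCommMonoid M]
    [Preorder M] {s : Finset ι} {f : ι → β → M} {A : M} (hA : 0 ≤ A)
    (hfA : ∀ i ∈ s, ∀ z, f i z ≤ A) (hs : (s : Set ι).PairwiseDisjoint fun i => support (f i))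
    (z : β) : ∑ i ∈ s, f i z ≤ A := by
  by_cases h : ∀ i ∈ s, f i z = 0
  · rw [Finset.sum_eq_zero h]
    exact hA
  push Not at h
  obtain ⟨i, hi, hiz⟩ := h
  rw [Finset.sum_eq_single_of_mem i hi fun j hj hji => ?_]
  · exact hfA i hi z
  by_contra hjz
  exact Set.disjoint_left.1 (hs hj hi hji) hjz hiz

lemma Finset.sum_le_card_nsmul_of_pairwiseDisjoint_support_fibers {ι κ β M : Type*}
    [Fintype ι] [Fintype κ] [DecidableEq κ] [AddCommMonoid M] [PartialOrder M]
    [IsOrderedAddMonoid M] {f : ι → β → M} {A : M} (col : ι → κ) (hA : 0 ≤ A)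
    (hfA : ∀ i z, f i z ≤ A) (hcol : ∀ k, {i | col i = k}.PairwiseDisjoint fun i => support (f i))
    (z : β) : ∑ i, f i z ≤ Fintype.card κ • A := by
  rw [← Finset.sum_fiberwise Finset.univ col]
  calc ∑ k, ∑ i with col i = k, f i z ≤ ∑ _k : κ, A :=
        Finset.sum_le_sum fun k _ => Finset.sum_le_of_pairwiseDisjoint_support hA
          (fun i _ => hfA i) ((hcol k).subset (by simp)) z
    _ = Fintype.card κ • A := by simp

theorem exists_finite_colored_ball_cover [ProperSpace α] {N : ℕ} {τ : ℝ} (hτ : 1 < τ)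
    (hN : IsEmpty (SatelliteConfig α N τ)) {β : Type u} {c : β → α} {r : β → ℝ}
    (hr : ∀ b, 0 < r b) {R₀ : ℝ} (hR₀ : ∀ b, r b ≤ R₀) (hc : IsCompact (range c)) :
    ∃ (ι : Type u) (_ : Fintype ι) (col : ι → Fin N) (b : ι → β) (ρ : ι → ℝ),
      (∀ i, ρ i ∈ Ioo 0 (r (b i))) ∧ range c ⊆ ⋃ i, ball (c (b i)) (ρ i) ∧
      ∀ k, {i | col i = k}.PairwiseDisjoint fun i => closedBall (c (b i)) (r (b i)) := by
  obtain ⟨s, hsd, hscov⟩ := exist_disjoint_covering_families hτ hN ⟨c, r, hr, R₀, hR₀⟩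
  have hcov : range c ⊆ ⋃ p : {p : Fin N × β // p.2 ∈ s p.1}, ball (c p.1.2) (r p.1.2) := by
    intro z hz
    obtain ⟨k, j, hj, hzj⟩ : ∃ k, ∃ j ∈ s k, z ∈ ball (c j) (r j) := by
      simpa only [mem_iUnion, exists_prop] using hscov hz
    exact mem_iUnion.2 ⟨⟨(k, j), hj⟩, hzj⟩
  obtain ⟨t, ht⟩ := hc.elim_finite_subcover _ (fun _ => isOpen_ball) hcov
  obtain ⟨ρ, hρcov, hρ⟩ := exists_subset_iUnion_ball_radius_pos_lt
    (c := fun i : t => c i.1.1.2) (r := fun i => r i.1.1.2) (fun _ => hr _) hc.isClosed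
    (fun _ _ => Set.toFinite _) (by simpa only [iUnion_subtype, exists_prop] using ht)
  refine ⟨t, inferInstance, fun i => i.1.1.1, fun i => i.1.1.2, ρ, hρ, hρcov,
    fun k i hi j hj hij => ?_⟩
  have hne : i.1.1.2 ≠ j.1.1.2 := fun h =>
    hij (Subtype.ext (Subtype.ext (Prod.ext (hi.trans hj.symm) h)))
  exact hsd k (hi ▸ i.1.2) (hj ▸ j.1.2) hne

lemma exists_radius_closedBall_mem_ball_subset {𝓕 : Set (Set α)} {x : α}
    (hx : ∃ Rx : ℝ, 0 < Rx ∧ ∀ R : ℝ, 0 < R → R ≤ Rx → closedBall x R ∈ 𝓕)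
    {U : Set α} (hU : IsOpen U) (hxU : x ∈ U) :
    ∃ r, 0 < r ∧ r ≤ 1 ∧ closedBall x r ∈ 𝓕 ∧ ball x r ⊆ U := by
  obtain ⟨Rx, hRx, hRx𝓕⟩ := hx
  obtain ⟨δ, hδ, hδU⟩ := Metric.isOpen_iff.1 hU x hxU
  exact ⟨min (min Rx δ) 1, by positivity, min_le_right _ _,
    hRx𝓕 _ (by positivity) ((min_le_left _ _).trans (min_le_left _ _)),
    (ball_subset_ball ((min_le_left _ _).trans (min_le_right _ _))).trans hδU⟩

theorem exists_mem_radialBumpSums_layer [ProperSpace α] {N : ℕ} {τ : ℝ} (hτ : 1 < τ)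
    (hN : IsEmpty (SatelliteConfig α N τ)) {K : Set α} {𝓕 : Set (Set α)}
    (h𝓕 : ∀ x ∈ K, ∃ Rx : ℝ, 0 < Rx ∧ ∀ R : ℝ, 0 < R → R ≤ Rx → closedBall x R ∈ 𝓕)
    {S : Set α} (hS : IsCompact S) (hSK : S ⊆ K) {U : Set α} (hU : IsOpen U) (hSU : S ⊆ U)
    {A : ℝ} (hA : 0 ≤ A) :
    ∃ g ∈ radialBumpSums K 𝓕, (∀ z, 0 ≤ g z) ∧ (∀ z, g z ≤ N * A) ∧
      support g ⊆ U ∧ ∀ z ∈ S, A ≤ g z := by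
  have hradius (x : S) : ∃ r, 0 < r ∧ r ≤ 1 ∧ closedBall (x : α) r ∈ 𝓕 ∧ ball (x : α) r ⊆ U :=
    exists_radius_closedBall_mem_ball_subset (h𝓕 x (hSK x.2)) hU (hSU x.2)
  choose r hr₀ hr₁ hr𝓕 hrU using hradius
  obtain ⟨ι, _, col, b, ρ, hρ, hcov, hdisj⟩ :=
    exists_finite_colored_ball_cover hτ hN hr₀ hr₁ (by rwa [Subtype.range_coe])
  set χ : ι → α → ℝ := fun i z => A * radialRamp (b i : α) (ρ i) ((ρ i + r (b i)) / 2) z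
  have hρr (i : ι) : ρ i < (ρ i + r (b i)) / 2 ∧ (ρ i + r (b i)) / 2 < r (b i) := by
    constructor <;> linarith [(hρ i).2]
  have hχsupp (i : ι) : support (χ i) ⊆ ball (b i : α) (r (b i)) :=
    (support_mul_subset_right _ _).trans <|
      (support_radialRamp_subset (hρr i).1).trans (ball_subset_ball (hρr i).2.le)
  have hχ₀ (i : ι) (z : α) : 0 ≤ χ i z := mul_nonneg hA (radialRamp_nonneg _ _ _ _)
  have hχA (i : ι) (z : α) : χ i z ≤ A :=
    mul_le_of_le_one_right hA (radialRamp_le_one _ _ _ _)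
  refine ⟨∑ i, χ i, sum_mem fun i _ => AddSubmonoid.subset_closure <|
      isRadialBump_const_mul_radialRamp (hSK (b i).2) (hr𝓕 _) (hr₀ _) (hρr i).1 (hρr i).2 hA,
    fun z => ?_, fun z => ?_, fun z hz => ?_, fun z hz => ?_⟩
  · rw [Finset.sum_apply]
    exact Finset.sum_nonneg fun i _ => hχ₀ i z
  · rw [Finset.sum_apply]
    simpa using Finset.sum_le_card_nsmul_of_pairwiseDisjoint_support_fibers col hA hχA
      (fun k => (hdisj k).mono fun i => (hχsupp i).trans ball_subset_closedBall) z
  · rw [mem_support, Finset.sum_apply] at hz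
    obtain ⟨i, -, hiz⟩ := Finset.exists_ne_zero_of_sum_ne_zero hz
    exact hrU _ (hχsupp i hiz)
  · obtain ⟨i, hzi⟩ := mem_iUnion.1 (hcov (by rwa [Subtype.range_coe]))
    calc A = χ i z := by
          simp only [χ, radialRamp_eq_one (hρr i).1 (mem_ball.1 hzi).le, mul_one]
      _ ≤ ∑ j, χ j z :=
          Finset.single_le_sum (f := fun j => χ j z) (fun j _ => hχ₀ j z) (Finset.mem_univ i)
      _ = (∑ j, χ j) z := (Finset.sum_apply _ _ _).symm

lemma continuous_of_mem_radialBumpSums {K : Set α} {𝓕 : Set (Set α)} {g : α → ℝ}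
    (hg : g ∈ radialBumpSums K 𝓕) : Continuous g :=
  AddSubmonoid.closure_induction (fun _ hχ => hχ.1) continuous_const
    (fun _ _ _ _ hf hg => hf.add hg) hg

theorem exists_mem_radialBumpSums_contraction [ProperSpace α] {N : ℕ} {τ : ℝ} (hτ : 1 < τ)
    (hN : IsEmpty (SatelliteConfig α N τ)) {K : Set α} (hK : IsCompact K) {𝓕 : Set (Set α)}
    (h𝓕 : ∀ x ∈ K, ∃ Rx : ℝ, 0 < Rx ∧ ∀ R : ℝ, 0 < R → R ≤ Rx → closedBall x R ∈ 𝓕)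
    {u : α → ℝ} (hu : Continuous u) (hu₀ : ∀ z, 0 ≤ u z) {M : ℝ} (hM : 0 < M)
    (huM : ∀ z ∈ K, u z ≤ M) :
    ∃ g ∈ radialBumpSums K 𝓕, (∀ z, g z ≤ u z) ∧
      ∀ z ∈ K, u z - g z ≤ (1 - 1 / (4 * (N + 1))) * M := by
  have hNA : N * (M / (4 * (N + 1))) ≤ M / 4 := by
    rw [mul_div_assoc', div_le_div_iff₀ (by positivity) (by norm_num)]
    nlinarith
  obtain ⟨g, hg, hg₀, hgNA, hgU, hgA⟩ := exists_mem_radialBumpSums_layer hτ hN h𝓕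
    (hK.inter_right (isClosed_Ici.preimage hu)) inter_subset_left (isOpen_Ioi.preimage hu)
    (fun z hz => show M / 4 < u z by linarith [show M / 2 ≤ u z from hz.2])
    (A := M / (4 * (N + 1))) (by positivity)
  refine ⟨g, hg, fun z => ?_, fun z hz => ?_⟩
  · by_cases hz : g z = 0
    · exact hz ▸ hu₀ z
    · linarith [hgNA z, show M / 4 < u z from hgU hz]
  · have hθ : (1 - 1 / (4 * (N + 1))) * M = M - M / (4 * (N + 1)) := by ring
    by_cases hz₂ : M / 2 ≤ u z
    · linarith [hgA z ⟨hz, hz₂⟩, huM z hz]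
    · have : M / (4 * (N + 1)) ≤ M / 2 :=
        div_le_div_of_nonneg_left hM.le (by norm_num) (by linarith [N.cast_nonneg (α := ℝ)])
      linarith [hg₀ z]

theorem exists_mem_radialBumpSums_approx [ProperSpace α] [HasBesicovitchCovering α]
    {K : Set α} (hK : IsCompact K) {𝓕 : Set (Set α)}
    (h𝓕 : ∀ x ∈ K, ∃ Rx : ℝ, 0 < Rx ∧ ∀ R : ℝ, 0 < R → R ≤ Rx → closedBall x R ∈ 𝓕)
    {φ : α → ℝ} (hφ : Continuous φ) (hφ₀ : ∀ z, 0 ≤ φ z) {ε : ℝ} (hε : 0 < ε) :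
    ∃ g ∈ radialBumpSums K 𝓕, (∀ z, g z ≤ φ z) ∧
      ∀ z ∈ K, φ z - g z ≤ ε := by
  obtain ⟨N, τ, hτ, hN⟩ := HasBesicovitchCovering.no_satelliteConfig (α := α)
  set θ : ℝ := 1 - 1 / (4 * (N + 1))
  have hq₀ : 0 < 1 / (4 * ((N : ℝ) + 1)) := by positivity
  have hq₁ : 1 / (4 * ((N : ℝ) + 1)) < 1 := by
    rw [div_lt_one (by positivity)]
    linarith [N.cast_nonneg (α := ℝ)]
  have hθ₀ : 0 < θ := by linarith
  have hθ₁ : θ < 1 := by linarith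
  obtain ⟨C, hC⟩ := hK.exists_bound_of_continuousOn hφ.continuousOn
  set M := max C 1
  have hM : 0 < M := zero_lt_one.trans_le (le_max_right _ _)
  have hgeom (k : ℕ) : ∃ g ∈ radialBumpSums K 𝓕,
      (∀ z, g z ≤ φ z) ∧ ∀ z ∈ K, φ z - g z ≤ θ ^ k * M := by
    induction k with
    | zero =>
      refine ⟨0, zero_mem _, hφ₀, fun z hz => ?_⟩
      simp only [pow_zero, one_mul, Pi.zero_apply, sub_zero]
      exact (Real.le_norm_self _).trans ((hC z hz).trans (le_max_left _ _))
    | succ k ih =>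
      obtain ⟨g, hg, hgφ, hφg⟩ := ih
      obtain ⟨g', hg', hg'le, hg'θ⟩ := exists_mem_radialBumpSums_contraction hτ hN hK h𝓕
        (hφ.sub (continuous_of_mem_radialBumpSums hg)) (fun z => sub_nonneg.2 (hgφ z))
        (by positivity) hφg
      refine ⟨g + g', add_mem hg hg', fun z => ?_, fun z hz => ?_⟩
      · have := hg'le z
        simp only [Pi.add_apply, Pi.sub_apply] at this ⊢
        linarith
      · have := hg'θ z hz
        simp only [Pi.add_apply, Pi.sub_apply] at this ⊢
        rw [pow_succ]
        linarith
  obtain ⟨k, hk⟩ := exists_pow_lt_of_lt_one (div_pos hε hM) hθ₁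
  obtain ⟨g, hg, hgφ, hφg⟩ := hgeom k
  exact ⟨g, hg, hgφ, fun z hz => (hφg z hz).trans ((lt_div_iff₀ hM).1 hk).le⟩

theorem stmt_11_general {n : ℕ}
    (K : Set (EuclideanSpace ℝ (Fin n)))
    (hK : IsCompact K)
    (𝓕 : Set (Set (EuclideanSpace ℝ (Fin n))))
    (h𝓕 : ∀ x ∈ K, ∃ Rx : ℝ, 0 < Rx ∧
      ∀ R : ℝ, 0 < R → R ≤ Rx → Metric.closedBall x R ∈ 𝓕)
    (φ : EuclideanSpace ℝ (Fin n) → ℝ)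
    (hφcont : Continuous φ)
    (hφnonneg : ∀ x, 0 ≤ φ x)
    (ε : ℝ) (hε : 0 < ε) :
    ∃ (q : ℕ) (χ : Fin q → EuclideanSpace ℝ (Fin n) → ℝ),
      (∀ p : Fin q,
        Continuous (χ p) ∧ (∀ z, 0 ≤ χ p z) ∧
        ∃ x ∈ K, ∃ R : ℝ, 0 < R ∧ Metric.closedBall x R ∈ 𝓕 ∧
          HasCompactSupport (χ p) ∧ tsupport (χ p) ⊆ Metric.ball x R ∧
          (∀ z w, dist z x = dist w x → χ p z = χ p w)) ∧
      (∀ z, ∑ p, χ p z ≤ φ z) ∧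
      (∀ z ∈ K, |∑ p, χ p z - φ z| ≤ ε) := by
  obtain ⟨g, hg, hgφ, hφg⟩ := exists_mem_radialBumpSums_approx hK h𝓕 hφcont hφnonneg hε
  obtain ⟨l, hl, rfl⟩ := AddSubmonoid.exists_list_of_mem_closure hg
  have hsum (z : EuclideanSpace ℝ (Fin n)) : ∑ p : Fin l.length, l[p.1] z = l.sum z := by
    rw [← Finset.sum_apply, Fin.sum_univ_getElem]
  refine ⟨l.length, fun p => l[p.1], fun p => hl _ (List.getElem_mem _), fun z => ?_, fun z hz => ?_⟩
  · rw [hsum]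
    exact hgφ z
  · rw [hsum, abs_sub_comm, abs_of_nonneg (sub_nonneg.2 (hgφ z))]
    exact hφg z hz

/-- Let `K ⊆ K' ⊂ ℝ^n` be compact, and `𝓕` a family of closed balls such
that for every `x ∈ K` there is `R_x > 0` with `closedBall x R ∈ 𝓕` for all `0 < R ≤ R_x`.
Let `φ ∈ C_c(K', [0,∞))` and `ε > 0`. Then there exist finitely many continuous nonnegative
functions `χ_1, …, χ_q`, each compactly supported in some ball `B_R(x)` of the family with
`x ∈ K`, `0 < R ≤ R_x`, and rotationally symmetric about `x`, such that `Σ χ_p ≤ φ` and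
`‖Σ χ_p − φ‖_{C^0(K)} ≤ ε`. -/
theorem stmt_11 {n : ℕ}
    (K K' : Set (EuclideanSpace ℝ (Fin n)))
    (hK : IsCompact K) (hK' : IsCompact K') (hKK' : K ⊆ K')
    (𝓕 : Set (Set (EuclideanSpace ℝ (Fin n))))
    (h𝓕 : ∀ x ∈ K, ∃ Rx : ℝ, 0 < Rx ∧
      ∀ R : ℝ, 0 < R → R ≤ Rx → Metric.closedBall x R ∈ 𝓕)
    (φ : EuclideanSpace ℝ (Fin n) → ℝ)
    (hφcont : Continuous φ) (hφc : HasCompactSupport φ) (hφsupp : tsupport φ ⊆ K')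
    (hφnonneg : ∀ x, 0 ≤ φ x)
    (ε : ℝ) (hε : 0 < ε) :
    ∃ (q : ℕ) (χ : Fin q → EuclideanSpace ℝ (Fin n) → ℝ),
      (∀ p : Fin q,
        Continuous (χ p) ∧ (∀ z, 0 ≤ χ p z) ∧
        ∃ x ∈ K, ∃ R : ℝ, 0 < R ∧ Metric.closedBall x R ∈ 𝓕 ∧
          HasCompactSupport (χ p) ∧ tsupport (χ p) ⊆ Metric.ball x R ∧
          (∀ z w, dist z x = dist w x → χ p z = χ p w)) ∧
      (∀ z, ∑ p, χ p z ≤ φ z) ∧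
      (∀ z ∈ K, |∑ p, χ p z - φ z| ≤ ε) :=
  stmt_11_general K hK 𝓕 h𝓕 φ hφcont hφnonneg ε hε
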